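/- arXiv:1212.2781 — 2 statements merged into one kernel-verified Lean document; each statement's English description precedes it below -/
import Mathlib

section
/- For N > 1, any distinct indices i₁,…,i_k ∈ {1,…,N} (with 0 ≤ k ≤ N−1) and any index s ∈ {1,…,k}, the sum over all i ∉ {i₁,…,i_k}, all s = 1,…,k, all permutations σ ∈ S_N with σ(i)=1, and all r with 2 ≤ r ≤ σ(i_s)−1 of the terms (−1)^σ · x_i^{N−r} · x_{i_s}^{N−σ(i_s)+r−1} · ∏_{j ≠ i, i_s} x_j^{N−σ(j)} equals zero. -/
/-!
For indices `i, s` let `T i s` (`transferSum x i s`) be the part of the sum belonging to the pair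
`(i, i_s) = (i, s)`; it moves `r - 1` from the exponent of `x_i` to that of `x_s` in the
Vandermonde monomial of `σ`. Then `T` is alternating: composing `σ` with the transposition `(i s)`
and reflecting `r ↦ σ(s) + 2 - r` identifies `T s i` with `-T i s`. Moreover every column sum
`∑ i, T i s` vanishes: the transposition `(0, r - 1)` of values is a sign-reversing involution
that only exchanges which variable carries the exponent `N - r`. Hence, with `S = {i₁, …, i_k}`,
`∑_{i ∉ S} ∑_{s ∈ S} T i s = -∑_{i ∈ S} ∑_{s ∈ S} T i s = 0`.
-/

open Finset Equiv

theorem Finset.sum_sum_eq_zero_of_alternating {α M : Type*} [AddCommGroup M] {T : α → α → M}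
    (hdiag : ∀ a, T a a = 0) (hanti : ∀ a b, T a b = -T b a) (S : Finset α) :
    ∑ a ∈ S, ∑ b ∈ S, T a b = 0 := by
  rw [← sum_product' S S T]
  refine sum_involution (fun p _ => p.swap) ?_ ?_ ?_ ?_
  · rintro ⟨a, b⟩ _
    simp [hanti a b]
  · rintro ⟨a, b⟩ _ hT hswap
    obtain rfl : b = a := congrArg Prod.fst hswap
    exact hT (hdiag b)
  · rintro ⟨a, b⟩ h
    simpa [and_comm] using h
  · rintro ⟨a, b⟩ _
    rfl

theorem Finset.sum_compl_sum_eq_zero_of_alternating {α M : Type*} [Fintype α] [DecidableEq α]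
    [AddCommGroup M] {T : α → α → M} (hdiag : ∀ a, T a a = 0) (hanti : ∀ a b, T a b = -T b a)
    (hcol : ∀ b, ∑ a, T a b = 0) (S : Finset α) :
    ∑ a ∈ Sᶜ, ∑ b ∈ S, T a b = 0 := by
  have hcompl : ∀ b, ∑ a ∈ Sᶜ, T a b = -∑ a ∈ S, T a b := fun b =>
    eq_neg_of_add_eq_zero_left (by rw [sum_compl_add_sum, hcol])
  rw [sum_comm, sum_congr rfl fun b _ => hcompl b, sum_neg_distrib, sum_comm,
    sum_sum_eq_zero_of_alternating hdiag hanti, neg_zero]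

theorem Finset.sum_Icc_reflect {M : Type*} [AddCommMonoid M] (f : ℕ → M) (a b : ℕ) :
    ∑ r ∈ Icc a b, f (a + b - r) = ∑ r ∈ Icc a b, f r := by
  refine sum_nbij' (fun r => a + b - r) (fun r => a + b - r) ?_ ?_ ?_ ?_ fun _ _ => rfl <;>
    intro r hr <;> simp only [mem_Icc] at hr ⊢ <;> omega

section TransferSum

variable {R : Type*} [CommRing R] {N : ℕ}

def transferSum (x : Fin N → R) (i s : Fin N) : R :=
  ∑ σ ∈ univ.filter (fun σ : Perm (Fin N) => (σ i : ℕ) = 0),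
    ∑ r ∈ Icc 2 (σ s : ℕ),
      ((Perm.sign σ : ℤ) : R) * x i ^ (N - r) * x s ^ (N + r - ((σ s : ℕ) + 2)) *
        ∏ j ∈ univ \ {i, s}, x j ^ (N - 1 - (σ j : ℕ))

theorem transferSum_self (x : Fin N → R) (s : Fin N) : transferSum x s s = 0 :=
  sum_eq_zero fun σ hσ => by
    rw [(mem_filter.1 hσ).2, Icc_eq_empty (by omega), sum_empty]

theorem transferSum_swap (x : Fin N → R) (i s : Fin N) :
    transferSum x i s = -transferSum x s i := by
  obtain rfl | hne := eq_or_ne i s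
  · rw [transferSum_self, neg_zero]
  rw [transferSum, transferSum, ← sum_neg_distrib]
  refine sum_equiv (Equiv.mulRight (swap i s)) (fun σ => ?_) fun σ hσ => ?_
  · simp
  have hsign : ((Perm.sign (σ * swap i s) : ℤ) : R) = -((Perm.sign σ : ℤ) : R) := by
    simp [Perm.sign_mul, Perm.sign_swap hne]
  have hprod : ∏ j ∈ univ \ {s, i}, x j ^ (N - 1 - ((σ * swap i s) j : ℕ))
      = ∏ j ∈ univ \ {i, s}, x j ^ (N - 1 - (σ j : ℕ)) := by
    rw [pair_comm]
    refine prod_congr rfl fun j hj => ?_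
    simp only [mem_sdiff, mem_insert, mem_singleton, not_or] at hj
    rw [Perm.mul_apply, swap_apply_of_ne_of_ne hj.2.1 hj.2.2]
  simp only [coe_mulRight, hsign, hprod]
  simp only [Perm.mul_apply, swap_apply_left]
  rw [← sum_Icc_reflect _ 2, ← sum_neg_distrib]
  refine sum_congr rfl fun r hr => ?_
  have hσs := (σ s).isLt
  rw [mem_Icc] at hr
  rw [show N - (2 + (σ s : ℕ) - r) = N + r - ((σ s : ℕ) + 2) by omega,
    show N + (2 + (σ s : ℕ) - r) - ((σ s : ℕ) + 2) = N - r by omega]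
  ring

def transferExponent (N r v : ℕ) : ℕ := if v = 0 then N - r else N - 1 - v

theorem transferExponent_swap [NeZero N] {r : ℕ} {w : Fin N} (hw : (w : ℕ) = r - 1) (v : Fin N) :
    transferExponent N r (swap 0 w v) = transferExponent N r v := by
  unfold transferExponent
  by_cases h0 : v = 0
  · subst h0
    simp only [swap_apply_left, Fin.val_zero]
    split_ifs <;> omega
  by_cases hvw : v = w
  · subst hvw
    simp only [swap_apply_right, Fin.val_zero]
    split_ifs <;> omega
  rw [swap_apply_of_ne_of_ne h0 hvw]

theorem mul_prod_sdiff_pair_eq_prod_erase (x : Fin N → R) {σ : Perm (Fin N)} {i s : Fin N}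
    (hi : (σ i : ℕ) = 0) (his : i ≠ s) (r : ℕ) :
    x i ^ (N - r) * ∏ j ∈ univ \ {i, s}, x j ^ (N - 1 - (σ j : ℕ))
      = ∏ j ∈ univ.erase s, x j ^ transferExponent N r (σ j) := by
  rw [← mul_prod_erase _ _ (mem_erase.2 ⟨his, mem_univ i⟩), transferExponent, if_pos hi,
    Finset.sdiff_insert, sdiff_singleton_eq_erase]
  refine congrArg _ (prod_congr rfl fun j hj => ?_)
  have hσj : (σ j : ℕ) ≠ 0 := fun h =>
    ne_of_mem_erase hj (σ.injective (Fin.ext (h.trans hi.symm)))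
  rw [transferExponent, if_neg hσj]

def transferTerm (x : Fin N → R) (s : Fin N) (σ : Perm (Fin N)) (r : ℕ) : R :=
  ((Perm.sign σ : ℤ) : R) * x s ^ (N + r - ((σ s : ℕ) + 2)) *
    ∏ j ∈ univ.erase s, x j ^ transferExponent N r (σ j)

theorem sum_transferSum_left_eq (x : Fin N → R) (s : Fin N) :
    ∑ i, transferSum x i s = ∑ σ, ∑ r ∈ Icc 2 (σ s : ℕ), transferTerm x s σ r := by
  have : NeZero N := ⟨s.pos.ne'⟩
  unfold transferSum
  rw [sum_comm' (t' := univ) (s' := fun σ => {σ.symm 0}) fun i σ => by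
    simp [Fin.val_eq_zero_iff, eq_symm_apply]]
  refine sum_congr rfl fun σ _ => ?_
  rw [sum_singleton]
  refine sum_congr rfl fun r hr => ?_
  have hσs : σ.symm 0 ≠ s := by
    rintro rfl
    simp only [apply_symm_apply, Fin.val_zero, mem_Icc] at hr
    omega
  rw [transferTerm, ← mul_prod_sdiff_pair_eq_prod_erase x (by simp) hσs]
  ring

theorem transferTerm_swap_mul [NeZero N] (x : Fin N → R) {s : Fin N} {σ : Perm (Fin N)} {r : ℕ}
    {w : Fin N} (hw : (w : ℕ) = r - 1) (hw0 : w ≠ 0) (hσs : σ s ≠ 0) (hσsw : σ s ≠ w) :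
    transferTerm x s (swap 0 w * σ) r = -transferTerm x s σ r := by
  simp only [transferTerm, Perm.sign_mul, Perm.sign_swap hw0.symm, Perm.mul_apply,
    swap_apply_of_ne_of_ne hσs hσsw, transferExponent_swap hw]
  push_cast
  ring

theorem sum_transferSum_left (x : Fin N → R) (s : Fin N) : ∑ i, transferSum x i s = 0 := by
  have : NeZero N := ⟨s.pos.ne'⟩
  have pivot : ∀ σ : Perm (Fin N), ∀ r ∈ Icc 2 (σ s : ℕ),
      (Fin.ofNat N (r - 1) : ℕ) = r - 1 ∧ Fin.ofNat N (r - 1) ≠ 0 ∧ σ s ≠ 0 ∧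
        σ s ≠ Fin.ofNat N (r - 1) := by
    intro σ r hr
    have hσs := (σ s).isLt
    rw [mem_Icc] at hr
    have hval : (Fin.ofNat N (r - 1) : ℕ) = r - 1 := by
      rw [Fin.val_ofNat, Nat.mod_eq_of_lt (by omega)]
    simp only [ne_eq, Fin.ext_iff, hval, Fin.val_zero, true_and]
    omega
  rw [sum_transferSum_left_eq, sum_sigma']
  refine sum_involution (fun p _ => ⟨swap 0 (Fin.ofNat N (p.2 - 1)) * p.1, p.2⟩) ?_ ?_ ?_ ?_
  · rintro ⟨σ, r⟩ hp
    obtain ⟨hw, hw0, hσs, hσsw⟩ := pivot σ r (mem_sigma.1 hp).2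
    rw [transferTerm_swap_mul x hw hw0 hσs hσsw, add_neg_cancel]
  · rintro ⟨σ, r⟩ hp _ h
    obtain ⟨-, hw0, -, -⟩ := pivot σ r (mem_sigma.1 hp).2
    exact hw0 (swap_eq_one_iff.1 (mul_eq_right.1 (congrArg Sigma.fst h))).symm
  · rintro ⟨σ, r⟩ hp
    obtain ⟨-, -, hσs, hσsw⟩ := pivot σ r (mem_sigma.1 hp).2
    simp only [mem_sigma, mem_univ, true_and] at hp ⊢
    rwa [Perm.mul_apply, swap_apply_of_ne_of_ne hσs hσsw]
  · rintro ⟨σ, r⟩ _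
    simp only [swap_mul_self_mul]

end TransferSum

theorem stmt_4_general {R : Type*} [CommRing R] (N k : ℕ)
    (ι : Fin k ↪ Fin N) (x : Fin N → R) :
    ∑ i ∈ Finset.univ.filter (fun i : Fin N => ∀ t, i ≠ ι t),
      ∑ s : Fin k,
        ∑ σ ∈ Finset.univ.filter (fun σ : Equiv.Perm (Fin N) => (σ i : ℕ) = 0),
          ∑ r ∈ Finset.Icc 2 ((σ (ι s) : ℕ)),
            ((Equiv.Perm.sign σ : ℤ) : R) * x i ^ (N - r) *
              x (ι s) ^ (N + r - ((σ (ι s) : ℕ) + 2)) *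
              ∏ j ∈ Finset.univ \ {i, ι s}, x j ^ (N - 1 - (σ j : ℕ))
      = 0 := by
  have hcompl : univ.filter (fun i : Fin N => ∀ t, i ≠ ι t) = (univ.map ι)ᶜ := by
    ext i
    simp [eq_comm]
  have h := sum_compl_sum_eq_zero_of_alternating (transferSum_self x) (transferSum_swap x)
    (sum_transferSum_left x) (univ.map ι)
  simp only [sum_map] at h
  rwa [hcompl]

/-- for `N > 1` and distinct indices `i₁,…,i_k` (given by an
embedding `ι : Fin k ↪ Fin N`, `k ≤ N−1`), the sum over all `i ∉ {i₁,…,i_k}`,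
all `s ∈ {1,…,k}`, all permutations `σ ∈ S_N` with `σ(i) = 1`, and all `r` with
`2 ≤ r ≤ σ(i_s) − 1`, of
`(−1)^σ · x_i^{N−r} · x_{i_s}^{N−σ(i_s)+r−1} · ∏_{j ≠ i, i_s} x_j^{N−σ(j)}`
equals zero.  Here `σ` is 1-indexed via `σ₁(j) = (σ j : ℕ) + 1`, so `σ(i)=1`
reads `(σ i : ℕ) = 0` and `σ(i_s) − 1 = (σ (ι s) : ℕ)`. -/
theorem stmt_4 {R : Type*} [CommRing R] (N k : ℕ) (hN : 1 < N) (hk : k ≤ N - 1)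
    (ι : Fin k ↪ Fin N) (x : Fin N → R) :
    ∑ i ∈ Finset.univ.filter (fun i : Fin N => ∀ t, i ≠ ι t),
      ∑ s : Fin k,
        ∑ σ ∈ Finset.univ.filter (fun σ : Equiv.Perm (Fin N) => (σ i : ℕ) = 0),
          ∑ r ∈ Finset.Icc 2 ((σ (ι s) : ℕ)),
            ((Equiv.Perm.sign σ : ℤ) : R) * x i ^ (N - r) *
              x (ι s) ^ (N + r - ((σ (ι s) : ℕ) + 2)) *
              ∏ j ∈ Finset.univ \ {i, ι s}, x j ^ (N - 1 - (σ j : ℕ))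
      = 0 :=
  stmt_4_general N k ι x
end

section
/- For N > 1 and fixed distinct indices i₁,…,i_k ∈ {1,…,N}, the sum over s ∈ {1,…,k} and over i ∈ {1,…,N} \ {i₁,…,i_k} of the rational functions ( (−1)^{i+1} x_i^{N−1} x_{i_s} Δ_i + (−1)^{i_s+1} x_{i_s}^{N−1} x_i Δ_{i_s} ) / ( x_i − x_{i_s} ) is equal to zero, where Δ_j = Δ(x₁,…,x̂_j,…,x_N) is the Vandermonde polynomial with the variable x_j omitted. -/
/-!
Put `u j = (-1) ^ j Δ j`. Up to a common sign, `u j` is the cofactor of the entry `(j, N)` of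
the Vandermonde matrix of `x`, so `∑ j, u j p(x j) = 0` for every polynomial `p` of degree
`≤ N - 2`: this is the determinant of the Vandermonde matrix with its last column replaced by
`(p(x j))ⱼ`, a combination of the other columns.

Let `T i j` be the summand. For fixed `j`, `P(x j) ∑ i, T i j = ∑ i, u i q(x i) = 0`, where
`P(t) = ∏ i ≠ j, (t - x i)` and `q(t) = (x j P(x j) t ^ (N - 1) - x j ^ N P(t)) / (t - x j)` is a
polynomial of degree `N - 2`. As `T` is antisymmetric, the sum over `i ∉ {i₁, …, i_k}` is minus
the sum over `i ∈ {i₁, …, i_k}`, and that double sum cancels in pairs.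
-/

open Finset

section

open Polynomial

theorem sum_sum_eq_zero_of_antisymm {ι M : Type*} [Fintype ι] [AddCommGroup M] (G : ι → ι → M)
    (hG : ∀ a b, G a b = -G b a) (hdiag : ∀ a, G a a = 0) : ∑ a, ∑ b, G a b = 0 := by
  rw [← Fintype.sum_prod_type']
  refine sum_ninvolution Prod.swap (fun p => by simp [hG p.1 p.2]) ?_ (fun _ => mem_univ _)
    fun _ => rfl
  rintro ⟨a, b⟩ hab hswap
  obtain rfl : b = a := congrArg Prod.fst hswap
  exact hab (hdiag b)

theorem eval_derivative_of_eq_X_sub_C_mul {R : Type*} [CommRing R] {f q : R[X]} {z : R}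
    (h : f = (X - C z) * q) : (derivative f).eval z = q.eval z := by
  simp [h, derivative_mul]

theorem Matrix.det_vandermonde_neg {R : Type*} [CommRing R] {m : ℕ} (v : Fin m → R) :
    (vandermonde (-v)).det = ∏ a, ∏ b ∈ Ioi a, (v a - v b) := by
  simp [Matrix.det_vandermonde, neg_add_eq_sub]

theorem Matrix.sum_neg_one_pow_mul_det_vandermonde_succAbove_mul_eval {R : Type*} [CommRing R]
    [IsDomain R] {n : ℕ} (y : Fin (n + 2) → R) {p : R[X]} (hp : p.natDegree ≤ n) :
    ∑ j : Fin (n + 2), (-1) ^ (j : ℕ) * (vandermonde (y ∘ j.succAbove)).det * p.eval (y j) = 0 := by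
  set A := Matrix.updateCol (vandermonde y) (Fin.last _) fun i => p.eval (y i)
  have hA : A.det = 0 := by
    rw [← exists_mulVec_eq_zero_iff]
    refine ⟨Fin.lastCases (-1) fun k => p.coeff k,
      fun h => by simpa using congrFun h (Fin.last _), ?_⟩
    funext i
    simp [A, mulVec, dotProduct, Fin.sum_univ_castSucc, updateCol_apply, Fin.castSucc_ne_last,
      eval_eq_sum_range' (Nat.lt_succ_of_le hp), ← Fin.sum_univ_eq_sum_range, mul_comm]
  have hminor (j : Fin (n + 2)) :
      A.submatrix j.succAbove (Fin.last _).succAbove = vandermonde (y ∘ j.succAbove) := by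
    ext a b
    simp [A, Fin.castSucc_ne_last]
  rw [det_succ_column A (Fin.last _)] at hA
  simp only [hminor, A, updateCol_self, Fin.val_last] at hA
  have hsign : (-1 : R) ^ (n + 1) ≠ 0 := pow_ne_zero _ (neg_ne_zero.mpr one_ne_zero)
  refine (mul_eq_zero.mp ?_).resolve_left hsign
  rw [mul_sum, ← hA]
  exact sum_congr rfl fun j _ => by ring

theorem exists_natDegree_le_eval_pow_div_sub {ι K : Type*} [Field K] [DecidableEq ι]
    {s : Finset ι} {n : ℕ} (hs : #s = n + 1) {y : ι → K} {z : K} (hz : ∀ i ∈ s, z ≠ y i) :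
    ∃ q : K[X], q.natDegree ≤ n ∧
      (∀ i ∈ s, q.eval (y i) = z * (∏ k ∈ s, (z - y k)) * y i ^ (n + 1) / (y i - z)) ∧
      q.eval z =
        z ^ (n + 1) * ∑ i ∈ s, (∏ k ∈ s, (z - y k) - z * ∏ k ∈ s.erase i, (z - y k)) := by
  set L := Lagrange.nodal s y
  have hLz : L.eval z = ∏ k ∈ s, (z - y k) := Lagrange.eval_nodal
  set f := C (z * L.eval z) * X ^ (n + 1) - C (z ^ (n + 2)) * L
  set q := f /ₘ (X - C z)
  have hfq : f = (X - C z) * q := by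
    refine (mul_divByMonic_eq_iff_isRoot.mpr ?_).symm
    simp only [f, IsRoot, eval_sub, eval_mul, eval_C, eval_pow, eval_X]
    ring
  refine ⟨q, ?_, fun i hi => ?_, ?_⟩
  · have hf : f.natDegree ≤ n + 1 := by
      refine (natDegree_sub_le _ _).trans (max_le ?_ ?_)
      · exact (natDegree_C_mul_le _ _).trans (natDegree_X_pow_le _)
      · exact (natDegree_C_mul_le _ _).trans (Lagrange.natDegree_nodal.trans hs).le
    rw [natDegree_divByMonic _ (monic_X_sub_C _), natDegree_X_sub_C]
    omega
  · rw [eq_div_iff (sub_ne_zero.mpr (hz i hi).symm), ← hLz]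
    have hLi : L.eval (y i) = 0 := Lagrange.eval_nodal_at_node hi
    have := congrArg (eval (y i)) hfq
    simp only [f, eval_sub, eval_mul, eval_C, eval_pow, eval_X, hLi] at this
    linear_combination -this
  · rw [← eval_derivative_of_eq_X_sub_C_mul hfq, ← hLz]
    simp only [f, L, derivative_sub, derivative_mul, derivative_C, derivative_X_pow,
      Lagrange.derivative_nodal, eval_sub, eval_mul, eval_add, eval_zero, eval_C, eval_pow,
      eval_X, eval_finsetSum, Lagrange.eval_nodal, sum_sub_distrib, sum_const, hs, nsmul_eq_mul,
      ← mul_sum, Nat.add_sub_cancel]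
    push_cast
    ring

section PairQuotient

variable {ι K : Type*} [Field K]

def pairQuotient (u y : ι → K) (m : ℕ) (i j : ι) : K :=
  (u i * y i ^ m * y j + u j * y j ^ m * y i) / (y i - y j)

theorem pairQuotient_self (u y : ι → K) (m : ℕ) (i : ι) : pairQuotient u y m i i = 0 := by
  simp [pairQuotient]

theorem pairQuotient_comm (u y : ι → K) (m : ℕ) (i j : ι) :
    pairQuotient u y m i j = -pairQuotient u y m j i := by
  rw [pairQuotient, pairQuotient, ← div_neg, neg_sub, add_comm]

theorem sum_pairQuotient_eq_zero [Fintype ι] [DecidableEq ι] {n : ℕ}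
    (hcard : Fintype.card ι = n + 2) {y : ι → K} (hy : Function.Injective y) {u : ι → K}
    (hu : ∀ p : K[X], p.natDegree ≤ n → ∑ i, u i * p.eval (y i) = 0) (j : ι) :
    ∑ i, pairQuotient u y (n + 1) i j = 0 := by
  set s := univ.erase j
  have hz : ∀ i ∈ s, y j ≠ y i := fun i hi h => (mem_erase.mp hi).1 (hy h).symm
  have hP : ∏ k ∈ s, (y j - y k) ≠ 0 :=
    prod_ne_zero_iff.mpr fun i hi => sub_ne_zero.mpr (hz i hi)
  obtain ⟨q, hq_deg, hq_node, hq_center⟩ :=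
    exists_natDegree_le_eval_pow_div_sub (n := n) (by simp [s, hcard]) hz
  have hmom := hu q hq_deg
  rw [← add_sum_erase _ _ (mem_univ j)] at hmom ⊢
  rw [pairQuotient_self, zero_add]
  refine (mul_eq_zero.mp ?_).resolve_left hP
  rw [mul_sum, ← hmom, hq_center, mul_sum, mul_sum, ← sum_add_distrib]
  refine sum_congr rfl fun i hi => ?_
  have hij : y i - y j ≠ 0 := sub_ne_zero.mpr (hz i hi).symm
  rw [hq_node i hi, pairQuotient, ← mul_prod_erase s (fun k => y j - y k) hi]
  field_simp
  ring

end PairQuotient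

end

open MvPolynomial

theorem stmt_18_general {F : Type*} [Field F] (n k : ℕ)
    (ι : Fin k ↪ Fin (n + 2)) :
    let K := FractionRing (MvPolynomial (Fin (n + 2)) F)
    let x : Fin (n + 2) → K := fun i => algebraMap (MvPolynomial (Fin (n + 2)) F) K (X i)
    let Δ : Fin (n + 2) → K := fun j =>
      ∏ a : Fin (n + 1), ∏ b ∈ Finset.Ioi a, (x (j.succAbove a) - x (j.succAbove b))
    (∑ s : Fin k, ∑ i ∈ Finset.univ.filter (fun i : Fin (n + 2) => ∀ t, i ≠ ι t),
        ((-1 : K) ^ (i : ℕ) * x i ^ (n + 1) * x (ι s) * Δ i +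
          (-1 : K) ^ ((ι s : Fin (n + 2)) : ℕ) * x (ι s) ^ (n + 1) * x i * Δ (ι s)) /
          (x i - x (ι s)))
      = 0 := by
  intro K x Δ
  have hx : Function.Injective x :=
    (IsFractionRing.injective (MvPolynomial (Fin (n + 2)) F) K).comp X_injective
  set u : Fin (n + 2) → K := fun j => (-1) ^ (j : ℕ) * Δ j
  have hu (p : Polynomial K) (hp : p.natDegree ≤ n) : ∑ j, u j * p.eval (x j) = 0 := by
    have hdeg : (p.comp (-Polynomial.X)).natDegree ≤ n :=
      Polynomial.natDegree_comp_le.trans (by simpa using hp)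
    convert Matrix.sum_neg_one_pow_mul_det_vandermonde_succAbove_mul_eval (-x) hdeg using 2 with j
    rw [Polynomial.eval_comp, Polynomial.eval_neg, Polynomial.eval_X, Pi.neg_apply, neg_neg]
    simp only [u, Δ, ← Matrix.det_vandermonde_neg]
    rfl
  have hcompl : univ.filter (fun i : Fin (n + 2) => ∀ t, i ≠ ι t) = (univ.map ι)ᶜ := by
    ext i; simp [eq_comm]
  calc _ = ∑ s, ∑ i ∈ (univ.map ι)ᶜ, pairQuotient u x (n + 1) i (ι s) := by
        rw [hcompl]
        refine sum_congr rfl fun s _ => sum_congr rfl fun i _ => ?_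
        rw [pairQuotient]
        ring
    _ = ∑ s, -∑ t, pairQuotient u x (n + 1) (ι t) (ι s) := by
        refine sum_congr rfl fun s _ => ?_
        rw [eq_neg_iff_add_eq_zero, ← sum_map univ ι (fun i => pairQuotient u x (n + 1) i (ι s)),
          sum_compl_add_sum, sum_pairQuotient_eq_zero (by simp) hx hu]
    _ = 0 := by
        rw [sum_neg_distrib, neg_eq_zero]
        exact sum_sum_eq_zero_of_antisymm _ (fun s t => pairQuotient_comm _ _ _ _ _)
          fun s => pairQuotient_self _ _ _ _

/-- Let `N = n+2 > 1`, let `x₁,…,x_N` be independent variables over a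
field `F` of characteristic zero, and let `i₁,…,i_k` be fixed distinct indices
(an embedding `ι : Fin k ↪ Fin N`).  Working in the field of fractions `K` of the
polynomial ring, the sum over `s ∈ {1,…,k}` and `i ∉ {i₁,…,i_k}` of
`((−1)^{i+1} x_i^{N−1} x_{i_s} Δ_i + (−1)^{i_s+1} x_{i_s}^{N−1} x_i Δ_{i_s}) / (x_i − x_{i_s})`
equals zero, where `Δ_j = Δ(x₁,…,x̂_j,…,x_N) = ∏_{a<b, a,b≠j}(x_a − x_b)` is the
Vandermonde polynomial with `x_j` omitted.  Indices are 0-based, so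
`(−1)^{i+1}` becomes `(−1)^{(i:ℕ)}`. -/
theorem stmt_18 {F : Type*} [Field F] [CharZero F] (n k : ℕ)
    (ι : Fin k ↪ Fin (n + 2)) :
    let K := FractionRing (MvPolynomial (Fin (n + 2)) F)
    let x : Fin (n + 2) → K := fun i => algebraMap (MvPolynomial (Fin (n + 2)) F) K (X i)
    let Δ : Fin (n + 2) → K := fun j =>
      ∏ a : Fin (n + 1), ∏ b ∈ Finset.Ioi a, (x (j.succAbove a) - x (j.succAbove b))
    (∑ s : Fin k, ∑ i ∈ Finset.univ.filter (fun i : Fin (n + 2) => ∀ t, i ≠ ι t),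
        ((-1 : K) ^ (i : ℕ) * x i ^ (n + 1) * x (ι s) * Δ i +
          (-1 : K) ^ ((ι s : Fin (n + 2)) : ℕ) * x (ι s) ^ (n + 1) * x i * Δ (ι s)) /
          (x i - x (ι s)))
      = 0 :=
  stmt_18_general n k ι
end
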